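/- Let f ∈ Diff^1(M) on a compact surface and let μ be an f-invariant probability measure (not necessarily ergodic) such that λ⁺(f,x) > λ⁻(f,x) for μ-a.e. x. Then every f̂-invariant lift μ̂ of μ is carried by graph(E⁺) ∪ graph(E⁻), and there are unique f̂-invariant lifts μ̂⁺, μ̂⁻ with μ̂⁺(graph(E⁺)) = 1 and μ̂⁻(graph(E⁻)) = 1. -/

import Mathlib

/-!
Off the graphs of `E⁺` and `E⁻`, the forward Birkhoff averages of `φ` tend to `λ⁺` and the
backward ones to `λ⁻`. The set `B` of such points is invariant mod `μ̂`, so `μ̂|_B` is invariant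
under `f̂` and `f̂⁻¹`; by dominated convergence both limits then have the same integral over `B`,
namely `∫_B φ dμ̂`. As `λ⁻ < λ⁺` on `B`, this forces `μ̂(B) = 0`.
A lift carried by the graph of a section `E` equals `E_* μ`, which gives uniqueness, and `E_* μ`
is invariant because `E` is equivariant.
-/

open MeasureTheory Filter Topology Set

lemma norm_birkhoffAverage_le {α E : Type*} [NormedAddCommGroup E] [NormedSpace ℝ E]
    {T : α → α} {g : α → E} {C : ℝ} (hg : ∀ x, ‖g x‖ ≤ C) (n : ℕ) (x : α) :
    ‖birkhoffAverage ℝ T g n x‖ ≤ C := by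
  rcases n.eq_zero_or_pos with rfl | hn
  · simpa using (norm_nonneg _).trans (hg x)
  have hsum : ‖birkhoffSum T g n x‖ ≤ n * C :=
    calc ‖birkhoffSum T g n x‖ ≤ ∑ k ∈ Finset.range n, ‖g (T^[k] x)‖ := norm_sum_le _ _
      _ ≤ ∑ _k ∈ Finset.range n, C := Finset.sum_le_sum fun k _ => hg _
      _ = n * C := by simp
  calc ‖birkhoffAverage ℝ T g n x‖ = (n : ℝ)⁻¹ * ‖birkhoffSum T g n x‖ := by
        rw [birkhoffAverage, norm_smul, norm_inv, Real.norm_natCast]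
    _ ≤ (n : ℝ)⁻¹ * (n * C) := by gcongr
    _ = C := by field_simp

lemma birkhoffAverage_eq_sum_div {α : Type*} (T : α → α) (g : α → ℝ) (n : ℕ) (x : α) :
    birkhoffAverage ℝ T g n x = (∑ k ∈ Finset.range n, g (T^[k] x)) / n := by
  rw [birkhoffAverage, birkhoffSum, smul_eq_mul, inv_mul_eq_div]

lemma birkhoffAverage_comp_eq_sum_div {α : Type*} (T : α → α) (g : α → ℝ) (n : ℕ) (x : α) :
    birkhoffAverage ℝ T (g ∘ T) n x = (∑ k ∈ Finset.range n, g (T^[k + 1] x)) / n := by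
  simp only [birkhoffAverage_eq_sum_div, Function.comp_apply, Function.iterate_succ_apply']

namespace MeasureTheory

section BirkhoffAverage

variable {α E : Type*} [MeasurableSpace α] [NormedAddCommGroup E] [NormedSpace ℝ E]
  {ν : Measure α} {T : α → α} {g : α → E}

lemma MeasurePreserving.aestronglyMeasurable_birkhoffAverage (hT : MeasurePreserving T ν ν)
    (hg : AEStronglyMeasurable g ν) (n : ℕ) :
    AEStronglyMeasurable (birkhoffAverage ℝ T g n) ν := by
  have hsum : birkhoffAverage ℝ T g n = (n : ℝ)⁻¹ • ∑ k ∈ Finset.range n, g ∘ T^[k] := by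
    ext x; simp [birkhoffAverage, birkhoffSum]
  rw [hsum]
  exact (Finset.aestronglyMeasurable_sum _ fun k _ =>
    hg.comp_measurePreserving (hT.iterate k)).const_smul _

lemma MeasurePreserving.integral_birkhoffAverage [CompleteSpace E]
    (hT : MeasurePreserving T ν ν) (hg : Integrable g ν) {n : ℕ} (hn : n ≠ 0) :
    ∫ x, birkhoffAverage ℝ T g n x ∂ν = ∫ x, g x ∂ν := by
  have hcomp : ∀ k, ∫ x, g (T^[k] x) ∂ν = ∫ x, g x ∂ν := fun k => by
    have hTk := hT.iterate k
    have hgk : AEStronglyMeasurable g (ν.map T^[k]) := by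
      rw [hTk.map_eq]; exact hg.aestronglyMeasurable
    rw [← integral_map hTk.aemeasurable hgk, hTk.map_eq]
  have hint : ∀ k, Integrable (fun x => g (T^[k] x)) ν := fun k =>
    (hT.iterate k).integrable_comp_of_integrable hg
  simp only [birkhoffAverage, birkhoffSum]
  rw [integral_smul, integral_finsetSum _ fun k _ => hint k]
  simp only [hcomp, Finset.sum_const, Finset.card_range]
  rw [← Nat.cast_smul_eq_nsmul ℝ, smul_smul, inv_mul_cancel₀ (Nat.cast_ne_zero.2 hn), one_smul]

lemma MeasurePreserving.integral_eq_of_tendsto_birkhoffAverage [CompleteSpace E]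
    [IsFiniteMeasure ν] (hT : MeasurePreserving T ν ν) (hg : AEStronglyMeasurable g ν)
    {C : ℝ} (hC : ∀ x, ‖g x‖ ≤ C) {L : α → E}
    (hL : ∀ᵐ x ∂ν, Tendsto (birkhoffAverage ℝ T g · x) atTop (𝓝 (L x))) :
    Integrable L ν ∧ ∫ x, L x ∂ν = ∫ x, g x ∂ν := by
  have hav := hT.aestronglyMeasurable_birkhoffAverage hg
  have hLm : AEStronglyMeasurable L ν := aestronglyMeasurable_of_tendsto_ae atTop hav hL
  have hLC : ∀ᵐ x ∂ν, ‖L x‖ ≤ C := hL.mono fun x hx =>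
    le_of_tendsto hx.norm (Eventually.of_forall fun n => norm_birkhoffAverage_le hC n x)
  refine ⟨.of_bound hLm C hLC, tendsto_nhds_unique (l := atTop)
    (f := fun n => ∫ x, birkhoffAverage ℝ T g n x ∂ν) ?_ (tendsto_const_nhds.congr' ?_)⟩
  · exact tendsto_integral_of_dominated_convergence (fun _ => C) hav (integrable_const C)
      (fun n => .of_forall fun x => norm_birkhoffAverage_le hC n x) hL
  · filter_upwards [eventually_ne_atTop 0] with n hn
    exact (hT.integral_birkhoffAverage (.of_bound hg C (.of_forall hC)) hn).symm

end BirkhoffAverage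

lemma Measure.eq_zero_of_integral_eq_of_ae_lt {α : Type*} [MeasurableSpace α] {ν : Measure α}
    {f g : α → ℝ} (hf : Integrable f ν) (hg : Integrable g ν) (hlt : ∀ᵐ x ∂ν, f x < g x)
    (heq : ∫ x, f x ∂ν = ∫ x, g x ∂ν) : ν = 0 := by
  have hzero : g - f =ᵐ[ν] 0 :=
    (integral_eq_zero_iff_of_nonneg_ae (hlt.mono fun x hx => (sub_pos.2 hx).le) (hg.sub hf)).1
      (by rw [integral_sub hg hf, heq, sub_self])
  rw [← ae_eq_bot, ← eventually_false_iff_eq_bot]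
  filter_upwards [hzero, hlt] with x h0 hx
  simp only [Pi.sub_apply, Pi.zero_apply, sub_eq_zero] at h0
  exact hx.ne h0.symm

lemma MeasurePreserving.eq_zero_of_limit_birkhoffAverage_symm_lt {α : Type*} [MeasurableSpace α]
    {ν : Measure α} [IsFiniteMeasure ν] {e : α ≃ᵐ α} (he : MeasurePreserving e ν ν)
    {g : α → ℝ} (hg : Measurable g) {C : ℝ} (hC : ∀ x, ‖g x‖ ≤ C) {L M : α → ℝ}
    (hL : ∀ᵐ x ∂ν, Tendsto (birkhoffAverage ℝ e g · x) atTop (𝓝 (L x)))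
    (hM : ∀ᵐ x ∂ν, Tendsto (birkhoffAverage ℝ e.symm (g ∘ e.symm) · x) atTop (𝓝 (M x)))
    (hlt : ∀ᵐ x ∂ν, M x < L x) : ν = 0 := by
  obtain ⟨hLi, hLg⟩ := he.integral_eq_of_tendsto_birkhoffAverage hg.aestronglyMeasurable hC hL
  obtain ⟨hMi, hMg⟩ := he.symm.integral_eq_of_tendsto_birkhoffAverage
    (hg.comp e.symm.measurable).aestronglyMeasurable (fun x => hC _) hM
  refine Measure.eq_zero_of_integral_eq_of_ae_lt hMi hLi hlt ?_
  rw [hMg, hLg, Function.comp_def, he.symm.integral_comp' g]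

lemma preimage_setOf_eq_section_ae_eq {X Y : Type*} [MeasurableSpace Y] {π : Y → X}
    {f : X → X} {ν : Measure Y} {e : Y → Y} (he : Function.Injective e)
    (hcomm : π ∘ e = f ∘ π) {E : X → Y} (h : ∀ᵐ y ∂ν, e (E (π y)) = E (f (π y))) :
    e ⁻¹' {y | y = E (π y)} =ᵐ[ν] {y | y = E (π y)} := by
  refine eventuallyEq_set.2 (h.mono fun y hy => ?_)
  change e y = E (π (e y)) ↔ y = E (π y)
  rw [show π (e y) = f (π y) from congrFun hcomm y, ← hy, he.eq_iff]

section Sections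

variable {X Y : Type*} [MeasurableSpace X] [MeasurableSpace Y] {π : Y → X} {f : X → X}
  {μ : Measure X} {ν : Measure Y}

lemma Measure.eq_map_map_of_ae_eq_comp {E : X → Y} (hπ : Measurable π) (hE : Measurable E)
    (h : ∀ᵐ y ∂ν, y = E (π y)) : ν = (ν.map π).map E := by
  rw [Measure.map_map hE hπ, ← Measure.map_congr (f := id) (g := E ∘ π) h, Measure.map_id]

lemma MeasurePreserving.map_of_ae_comp_eq {E : X → Y} {F : Y → Y}
    (hf : MeasurePreserving f μ μ) (hF : Measurable F) (hE : Measurable E)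
    (h : ∀ᵐ x ∂μ, F (E x) = E (f x)) :
    MeasurePreserving F (μ.map E) (μ.map E) :=
  ⟨hF, by rw [Measure.map_map hF hE, Measure.map_congr (f := F ∘ E) (g := E ∘ f) h,
    ← Measure.map_map hE hf.measurable, hf.map_eq]⟩

theorem existsUnique_invariant_lift_ae_eq_section [MeasurableEq Y] [IsProbabilityMeasure μ]
    {E : X → Y} {F : Y → Y} (hπ : Measurable π) (hE : Measurable E) (hEsec : π ∘ E = id)
    (hF : Measurable F) (hf : MeasurePreserving f μ μ) (h : ∀ᵐ x ∂μ, F (E x) = E (f x)) :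
    ∃! ν : Measure Y, IsProbabilityMeasure ν ∧ MeasurePreserving F ν ν ∧ ν.map π = μ ∧
      ν {y | y = E (π y)} = 1 := by
  have hgraph : MeasurableSet {y | y = E (π y)} :=
    measurableSet_eq_fun measurable_id (hE.comp hπ)
  have hsec : ∀ x, π (E x) = x := congrFun hEsec
  refine ⟨μ.map E, ⟨Measure.isProbabilityMeasure_map hE.aemeasurable,
    hf.map_of_ae_comp_eq hF hE h, by rw [Measure.map_map hπ hE, hEsec, Measure.map_id], ?_⟩, ?_⟩
  · rw [Measure.map_apply hE hgraph, ← measure_univ (μ := μ)]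
    congr
    ext x
    simp [hsec]
  · rintro ν ⟨_, -, hνπ, hν1⟩
    rw [← hνπ]
    exact Measure.eq_map_map_of_ae_eq_comp hπ hE
      (ae_iff.2 ((prob_compl_eq_zero_iff hgraph).2 hν1))

theorem measure_setOf_eq_section_or_eq_section_eq_one [MeasurableEq Y] [IsProbabilityMeasure ν]
    (hπ : Measurable π) {e : Y ≃ᵐ Y} (he : MeasurePreserving e ν ν) (hcomm : π ∘ e = f ∘ π)
    {Ep Em : X → Y} (hEp : Measurable Ep) (hEm : Measurable Em) {g : Y → ℝ} (hg : Measurable g)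
    {C : ℝ} (hC : ∀ y, ‖g y‖ ≤ C) {lp lm : X → ℝ}
    (hlt : ∀ᵐ x ∂ν.map π, lm x < lp x)
    (hequiv : ∀ᵐ x ∂ν.map π, e (Ep x) = Ep (f x) ∧ e (Em x) = Em (f x))
    (hfwd : ∀ᵐ x ∂ν.map π, ∀ y, π y = x → y ≠ Em x →
      Tendsto (birkhoffAverage ℝ e g · y) atTop (𝓝 (lp x)))
    (hbwd : ∀ᵐ x ∂ν.map π, ∀ y, π y = x → y ≠ Ep x →
      Tendsto (birkhoffAverage ℝ e.symm (g ∘ e.symm) · y) atTop (𝓝 (lm x))) :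
    ν {y | y = Ep (π y) ∨ y = Em (π y)} = 1 := by
  set Gp : Set Y := {y | y = Ep (π y)}
  set Gm : Set Y := {y | y = Em (π y)}
  have hGp : MeasurableSet Gp := measurableSet_eq_fun measurable_id (hEp.comp hπ)
  have hGm : MeasurableSet Gm := measurableSet_eq_fun measurable_id (hEm.comp hπ)
  have hB : MeasurableSet (Gpᶜ ∩ Gmᶜ) := hGp.compl.inter hGm.compl
  have hequiv' := ae_of_ae_map hπ.aemeasurable hequiv
  have hBinv : e ⁻¹' (Gpᶜ ∩ Gmᶜ) =ᵐ[ν] (Gpᶜ ∩ Gmᶜ : Set Y) :=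
    (preimage_setOf_eq_section_ae_eq e.injective hcomm (hequiv'.mono fun _ h => h.1)).compl.inter
      (preimage_setOf_eq_section_ae_eq e.injective hcomm (hequiv'.mono fun _ h => h.2)).compl
  have heB : MeasurePreserving e (ν.restrict (Gpᶜ ∩ Gmᶜ)) (ν.restrict (Gpᶜ ∩ Gmᶜ)) := by
    simpa only [Measure.restrict_congr_set hBinv] using he.restrict_preimage hB
  have hνB : ν.restrict (Gpᶜ ∩ Gmᶜ) = 0 := by
    refine heB.eq_zero_of_limit_birkhoffAverage_symm_lt hg hC (L := lp ∘ π) (M := lm ∘ π)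
      ((ae_restrict_iff' hB).2 ?_) ((ae_restrict_iff' hB).2 ?_)
      (ae_restrict_of_ae (ae_of_ae_map hπ.aemeasurable hlt))
    · filter_upwards [ae_of_ae_map hπ.aemeasurable hfwd] with y hy hyB using hy y rfl hyB.2
    · filter_upwards [ae_of_ae_map hπ.aemeasurable hbwd] with y hy hyB using hy y rfl hyB.1
  rw [Measure.restrict_eq_zero, ← compl_union] at hνB
  exact (prob_compl_eq_zero_iff (hGp.union hGm)).1 hνB

end Sections

end MeasureTheory

theorem statement5_general
    {X Xh : Type*} [MetricSpace X] [MeasurableSpace X] [BorelSpace X]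
    [MetricSpace Xh] [CompactSpace Xh] [MeasurableSpace Xh] [BorelSpace Xh]
    (π : Xh → X) (hπc : Continuous π)
    (f : X ≃ₜ X) (fh : Xh ≃ₜ Xh) (hcomm : π ∘ fh = f ∘ π)
    (φ : Xh → ℝ) (hφ : Continuous φ)
    (μ : Measure X) [IsProbabilityMeasure μ] (hinv : MeasurePreserving f μ μ)
    (Ep Em : X → Xh) (hEpm : Measurable Ep) (hEmm : Measurable Em)
    (hEpsec : π ∘ Ep = id) (hEmsec : π ∘ Em = id)
    (lp lm : X → ℝ)
    (hae : ∀ᵐ x ∂μ,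
      lm x < lp x ∧
      fh (Ep x) = Ep (f x) ∧ fh (Em x) = Em (f x) ∧ Ep x ≠ Em x ∧
      (∀ y : Xh, π y = x → y ≠ Em x →
        Tendsto (fun n : ℕ => (∑ k ∈ Finset.range n, φ (fh^[k] y)) / n)
          atTop (𝓝 (lp x))) ∧
      (∀ y : Xh, π y = x → y ≠ Ep x →
        Tendsto (fun n : ℕ => (∑ k ∈ Finset.range n, φ (fh.symm^[k + 1] y)) / n)
          atTop (𝓝 (lm x)))) :
    (∀ μh : Measure Xh, IsProbabilityMeasure μh → MeasurePreserving fh μh μh →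
        Measure.map π μh = μ →
        μh {y | y = Ep (π y) ∨ y = Em (π y)} = 1) ∧
    (∃! μhp : Measure Xh, IsProbabilityMeasure μhp ∧ MeasurePreserving fh μhp μhp ∧
        Measure.map π μhp = μ ∧ μhp {y | y = Ep (π y)} = 1) ∧
    (∃! μhm : Measure Xh, IsProbabilityMeasure μhm ∧ MeasurePreserving fh μhm μhm ∧
        Measure.map π μhm = μ ∧ μhm {y | y = Em (π y)} = 1) := by
  have hπ : Measurable π := hπc.measurable
  refine ⟨fun μh _ hμh hlift => ?_,
    existsUnique_invariant_lift_ae_eq_section hπ hEpm hEpsec fh.measurable hinv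
      (hae.mono fun _ hx => hx.2.1),
    existsUnique_invariant_lift_ae_eq_section hπ hEmm hEmsec fh.measurable hinv
      (hae.mono fun _ hx => hx.2.2.1)⟩
  obtain ⟨C, hC⟩ := isCompact_univ.exists_bound_of_continuousOn hφ.continuousOn
  subst hlift
  exact measure_setOf_eq_section_or_eq_section_eq_one (e := fh.toMeasurableEquiv) hπ hμh hcomm
    hEpm hEmm hφ.measurable (fun y => hC y (mem_univ y)) (hae.mono fun _ hx => hx.1)
    (hae.mono fun _ hx => ⟨hx.2.1, hx.2.2.1⟩)
    (hae.mono fun _ hx y hy hne => by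
      simpa [birkhoffAverage_eq_sum_div] using hx.2.2.2.2.1 y hy hne)
    (hae.mono fun _ hx y hy hne => by
      simpa [birkhoffAverage_comp_eq_sum_div] using hx.2.2.2.2.2 y hy hne)

/-- Let `f ∈ Diff¹(M)` on a compact surface and let `μ` be an
`f`-invariant probability measure (not necessarily ergodic) such that
`λ⁺(f,x) > λ⁻(f,x)` for `μ`-a.e. `x`.  The projective tangent bundle is presented
as a compact metric space `Xh` with projection `π` and canonical lift `fh` (a
homeomorphism with `π ∘ fh = f ∘ π`); `φ(x,E) = log‖Df_x|_E‖`; the Oseledets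
sections `Ep, Em : X → Xh` record the graphs of `E⁺, E⁻`, are `fh`-equivariant
and distinct a.e., and the pointwise exponents `lp x = λ⁺(f,x) > λ⁻(f,x) = lm x`
are characterized a.e. by the Oseledets dichotomy: along any fiber point other
than `Em x` the forward Birkhoff averages of `φ` converge to `lp x`, and along
any fiber point other than `Ep x` the backward Birkhoff averages converge to
`lm x`.  Then every `fh`-invariant lift `μh` of `μ` is carried by
`graph(E⁺) ∪ graph(E⁻)`, and there are unique `fh`-invariant lifts `μ̂⁺, μ̂⁻`
with `μ̂⁺(graph(E⁺)) = 1` and `μ̂⁻(graph(E⁻)) = 1`. -/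
theorem statement5
    {X Xh : Type*} [MetricSpace X] [CompactSpace X] [MeasurableSpace X] [BorelSpace X]
    [MetricSpace Xh] [CompactSpace Xh] [MeasurableSpace Xh] [BorelSpace Xh]
    (π : Xh → X) (hπc : Continuous π) (hπs : Function.Surjective π)
    (f : X ≃ₜ X) (fh : Xh ≃ₜ Xh) (hcomm : π ∘ fh = f ∘ π)
    (φ : Xh → ℝ) (hφ : Continuous φ)
    (μ : Measure X) [IsProbabilityMeasure μ] (hinv : MeasurePreserving f μ μ)
    (Ep Em : X → Xh) (hEpm : Measurable Ep) (hEmm : Measurable Em)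
    (hEpsec : π ∘ Ep = id) (hEmsec : π ∘ Em = id)
    (lp lm : X → ℝ)
    (hae : ∀ᵐ x ∂μ,
      lm x < lp x ∧
      fh (Ep x) = Ep (f x) ∧ fh (Em x) = Em (f x) ∧ Ep x ≠ Em x ∧
      (∀ y : Xh, π y = x → y ≠ Em x →
        Tendsto (fun n : ℕ => (∑ k ∈ Finset.range n, φ (fh^[k] y)) / n)
          atTop (𝓝 (lp x))) ∧
      (∀ y : Xh, π y = x → y ≠ Ep x →
        Tendsto (fun n : ℕ => (∑ k ∈ Finset.range n, φ (fh.symm^[k + 1] y)) / n)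
          atTop (𝓝 (lm x)))) :
    (∀ μh : Measure Xh, IsProbabilityMeasure μh → MeasurePreserving fh μh μh →
        Measure.map π μh = μ →
        μh {y | y = Ep (π y) ∨ y = Em (π y)} = 1) ∧
    (∃! μhp : Measure Xh, IsProbabilityMeasure μhp ∧ MeasurePreserving fh μhp μhp ∧
        Measure.map π μhp = μ ∧ μhp {y | y = Ep (π y)} = 1) ∧
    (∃! μhm : Measure Xh, IsProbabilityMeasure μhm ∧ MeasurePreserving fh μhm μhm ∧
        Measure.map π μhm = μ ∧ μhm {y | y = Em (π y)} = 1) :=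
  statement5_general π hπc f fh hcomm φ hφ μ hinv Ep Em hEpm hEmm hEpsec hEmsec lp lm hae
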